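/- Let X ⊆ ℝ^n and Y ⊆ ℝ^m be nonempty compact sets, let F : X×Y → ℝ, c : X → ℝ^{ñ}, d : X×Y → ℝ^{m̃} be continuous, and define F_low = min_{X×Y} F and d_hi = max{‖d(x,y)‖ : (x,y) ∈ X×Y}. Let L(x,y,λx,λy;ρ) = F(x,y) + (‖[λx + ρc(x)]_+‖² − ‖λx‖²)/(2ρ) − (‖[λy + ρd(x,y)]_+‖² − ‖λy‖²)/(2ρ). Then for every ρ > 0, λx ∈ ℝ^{ñ}, and λy ∈ ℝ^{m̃} with λy ≥ 0 componentwise, and for all (x,y) ∈ X×Y: L(x,y,λx,λy;ρ) ≥ F_low − ‖λx‖²/(2ρ) − ρ^{-1}‖λy‖² − ρ·d_hi². -/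

import Mathlib

/-- Componentwise positive part `[v]₊` of a vector. -/
noncomputable def posPart {k : ℕ} (v : EuclideanSpace ℝ (Fin k)) : EuclideanSpace ℝ (Fin k) :=
  WithLp.toLp 2 (fun i => max (v i) 0)

/-!
Drop the nonnegative term `‖[λx + ρ c]₊‖²`. For the `y`-penalty, `‖[λy + ρ d]₊‖² ≤ ‖λy + ρ d‖²
≤ 2‖λy‖² + 2ρ²‖d‖²`, so that term costs at most `‖λy‖²/(2ρ) + ρ‖d‖²`. Finally `F ≥ F_low` and
`‖d‖ ≤ d_hi` at every point of the compact set `X × Y`.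
-/

lemma norm_posPart_le {k : ℕ} (v : EuclideanSpace ℝ (Fin k)) : ‖posPart v‖ ≤ ‖v‖ := by
  rw [EuclideanSpace.norm_eq, EuclideanSpace.norm_eq]
  refine Real.sqrt_le_sqrt (Finset.sum_le_sum fun i _ => ?_)
  show ‖max (v i) 0‖ ^ 2 ≤ ‖v i‖ ^ 2
  rw [Real.norm_eq_abs, Real.norm_eq_abs, sq_abs, sq_abs]
  rcases le_total (v i) 0 with h | h
  · simpa [max_eq_right h] using sq_nonneg (v i)
  · rw [max_eq_left h]

lemma norm_add_sq_le_two_mul {E : Type*} [SeminormedAddCommGroup E] (a b : E) :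
    ‖a + b‖ ^ 2 ≤ 2 * (‖a‖ ^ 2 + ‖b‖ ^ 2) :=
  (pow_le_pow_left₀ (norm_nonneg _) (norm_add_le a b) 2).trans add_sq_le

lemma norm_posPart_add_smul_sq_le {k : ℕ} (l v : EuclideanSpace ℝ (Fin k)) {ρ : ℝ} (hρ : 0 ≤ ρ) :
    ‖posPart (l + ρ • v)‖ ^ 2 ≤ 2 * (‖l‖ ^ 2 + ρ ^ 2 * ‖v‖ ^ 2) := by
  calc ‖posPart (l + ρ • v)‖ ^ 2 ≤ ‖l + ρ • v‖ ^ 2 :=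
        pow_le_pow_left₀ (norm_nonneg _) (norm_posPart_le _) 2
    _ ≤ 2 * (‖l‖ ^ 2 + ‖ρ • v‖ ^ 2) := norm_add_sq_le_two_mul _ _
    _ = 2 * (‖l‖ ^ 2 + ρ ^ 2 * ‖v‖ ^ 2) := by rw [norm_smul, Real.norm_of_nonneg hρ, mul_pow]

lemma posPart_penalty_le {k : ℕ} (l v : EuclideanSpace ℝ (Fin k)) {ρ : ℝ} (hρ : 0 < ρ) :
    (‖posPart (l + ρ • v)‖ ^ 2 - ‖l‖ ^ 2) / (2 * ρ) ≤ ‖l‖ ^ 2 / (2 * ρ) + ρ * ‖v‖ ^ 2 :=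
  calc (‖posPart (l + ρ • v)‖ ^ 2 - ‖l‖ ^ 2) / (2 * ρ)
      ≤ (2 * (‖l‖ ^ 2 + ρ ^ 2 * ‖v‖ ^ 2) - ‖l‖ ^ 2) / (2 * ρ) := by
        gcongr
        exact norm_posPart_add_smul_sq_le l v hρ.le
    _ = ‖l‖ ^ 2 / (2 * ρ) + ρ * ‖v‖ ^ 2 := by
        field_simp
        ring

lemma IsCompact.sInf_image_le {α β : Type*} [TopologicalSpace α] [TopologicalSpace β]
    [ConditionallyCompleteLinearOrder α] [OrderTopology α] {f : β → α} {K : Set β}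
    (hK : IsCompact K) (hf : ContinuousOn f K) {p : β} (hp : p ∈ K) : sInf (f '' K) ≤ f p :=
  csInf_le (hK.bddBelow_image hf) (Set.mem_image_of_mem f hp)

lemma IsCompact.le_sSup_image {α β : Type*} [TopologicalSpace α] [TopologicalSpace β]
    [ConditionallyCompleteLinearOrder α] [OrderTopology α] {f : β → α} {K : Set β}
    (hK : IsCompact K) (hf : ContinuousOn f K) {p : β} (hp : p ∈ K) : f p ≤ sSup (f '' K) :=
  le_csSup (hK.bddAbove_image hf) (Set.mem_image_of_mem f hp)

theorem aug_lagrangian_lower_bound {n m nt mt : ℕ}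
    (X : Set (EuclideanSpace ℝ (Fin n))) (Y : Set (EuclideanSpace ℝ (Fin m)))
    (hXcp : IsCompact X)
    (hYcp : IsCompact Y)
    (F : EuclideanSpace ℝ (Fin n) → EuclideanSpace ℝ (Fin m) → ℝ)
    (hFcont : ContinuousOn
      (fun u : (EuclideanSpace ℝ (Fin n)) × (EuclideanSpace ℝ (Fin m)) => F u.1 u.2) (X ×ˢ Y))
    (c : EuclideanSpace ℝ (Fin n) → EuclideanSpace ℝ (Fin nt))
    (d : EuclideanSpace ℝ (Fin n) → EuclideanSpace ℝ (Fin m) → EuclideanSpace ℝ (Fin mt))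
    (hdcont : ContinuousOn
      (fun u : (EuclideanSpace ℝ (Fin n)) × (EuclideanSpace ℝ (Fin m)) => d u.1 u.2) (X ×ˢ Y)) :
    ∀ ρ : ℝ, 0 < ρ →
    ∀ lx : EuclideanSpace ℝ (Fin nt),
    ∀ ly : EuclideanSpace ℝ (Fin mt), (∀ i, 0 ≤ ly i) →
    ∀ x ∈ X, ∀ y ∈ Y,
      sInf ((fun u : (EuclideanSpace ℝ (Fin n)) × (EuclideanSpace ℝ (Fin m)) =>
            F u.1 u.2) '' (X ×ˢ Y))
          - ‖lx‖ ^ 2 / (2 * ρ) - ρ⁻¹ * ‖ly‖ ^ 2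
          - ρ * (sSup ((fun u : (EuclideanSpace ℝ (Fin n)) × (EuclideanSpace ℝ (Fin m)) =>
              ‖d u.1 u.2‖) '' (X ×ˢ Y))) ^ 2
        ≤ F x y + (‖posPart (lx + ρ • c x)‖ ^ 2 - ‖lx‖ ^ 2) / (2 * ρ)
          - (‖posPart (ly + ρ • d x y)‖ ^ 2 - ‖ly‖ ^ 2) / (2 * ρ) := by
  intro ρ hρ lx ly _ x hx y hy
  have hK := hXcp.prod hYcp
  have hxy : (x, y) ∈ X ×ˢ Y := ⟨hx, hy⟩
  have hF := hK.sInf_image_le hFcont hxy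
  have hd := hK.le_sSup_image hdcont.norm hxy
  have hdsq := mul_le_mul_of_nonneg_left (pow_le_pow_left₀ (norm_nonneg _) hd 2) hρ.le
  have hx_term : -(‖lx‖ ^ 2 / (2 * ρ)) ≤ (‖posPart (lx + ρ • c x)‖ ^ 2 - ‖lx‖ ^ 2) / (2 * ρ) := by
    rw [neg_div', sub_eq_neg_add]
    gcongr
    exact le_add_of_nonneg_right (sq_nonneg _)
  have hy_term := posPart_penalty_le ly (d x y) hρ
  have hly : ‖ly‖ ^ 2 / (2 * ρ) ≤ ρ⁻¹ * ‖ly‖ ^ 2 := by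
    rw [div_eq_inv_mul]
    gcongr
    linarith
  dsimp only at hF hdsq
  linarith
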